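/- For p ∈ (5/6, 1), the derivative of π₃(y) = (1−p) + (2p−1)(3y²−2y³) at the fixed points y_± = 1/2 ± (1/2)√((6p−5)/(2p−1)) is strictly less than 1. -/

import Mathlib

/-!
Both fixed points satisfy `(2p - 1)(2y - 1)² = 6p - 5`, and since
`π₃'(y) = 6(2p - 1) y (1 - y) = (3/2)(2p - 1)(1 - (2y - 1)²)`, the slope there is `6(1 - p)`,
which is below `1` exactly when `p > 5/6`.
-/

lemma hasDerivAt_urnCubic (a b x : ℝ) :
    HasDerivAt (fun y : ℝ => a + b * (3 * y ^ 2 - 2 * y ^ 3)) (6 * b * x * (1 - x)) x := by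
  have h := (((hasDerivAt_pow 2 x).const_mul (3 : ℝ)).sub
    ((hasDerivAt_pow 3 x).const_mul (2 : ℝ))).const_mul b |>.const_add a
  exact h.congr_deriv (by norm_num; ring)

lemma deriv_urnCubic_eq_of_sq {p y : ℝ} (hy : (2 * p - 1) * (2 * y - 1) ^ 2 = 6 * p - 5) :
    deriv (fun y : ℝ => (1 - p) + (2 * p - 1) * (3 * y ^ 2 - 2 * y ^ 3)) y = 6 * (1 - p) := by
  rw [(hasDerivAt_urnCubic (1 - p) (2 * p - 1) y).deriv]
  linear_combination (-3 / 2 : ℝ) * hy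

lemma mul_sqrt_div_sq {a b : ℝ} (ha : 0 ≤ a) (hb : 0 < b) : b * Real.sqrt (a / b) ^ 2 = a := by
  rw [Real.sq_sqrt (div_nonneg ha hb.le)]
  field_simp

theorem stmt_14 (p : ℝ) (hp : p ∈ Set.Ioo (5/6 : ℝ) 1) :
    deriv (fun y : ℝ => (1 - p) + (2 * p - 1) * (3 * y^2 - 2 * y^3))
        (1/2 + (1/2) * Real.sqrt ((6 * p - 5) / (2 * p - 1))) < 1 ∧
    deriv (fun y : ℝ => (1 - p) + (2 * p - 1) * (3 * y^2 - 2 * y^3))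
        (1/2 - (1/2) * Real.sqrt ((6 * p - 5) / (2 * p - 1))) < 1 := by
  obtain ⟨hp_gt, -⟩ := hp
  have hs := mul_sqrt_div_sq (a := 6 * p - 5) (b := 2 * p - 1) (by linarith) (by linarith)
  constructor <;> rw [deriv_urnCubic_eq_of_sq (by linear_combination hs)] <;> linarith
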